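/- Evaluation of the Macdonald polynomial at t = 1 in terms of cyclotomic coefficients: for all integers 1 ≤ i ≤ n, C_{n−i}^{(i)}(q^{2i}) · c_{i,i−1}(q) = q^{2(n−i)(i−1)} · c_{n,i−1}(q) in ℚ(q). -/

import Mathlib

/- STATEMENT 17: Evaluation of the Macdonald polynomial at t = 1 in terms of cyclotomic
coefficients: for all integers 1 ≤ i ≤ n,
C_{n−i}^{(i)}(q^{2i}) · c_{i,i−1}(q) = q^{2(n−i)(i−1)} · c_{n,i−1}(q) in ℚ(q). -/

noncomputable section

/-- `q`, the generator of `ℚ(q)`. -/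
def q : RatFunc ℚ := RatFunc.X

/-- The classical cyclotomic coefficient `c_{n,i−1}(q)`. -/
def cyc (n i : ℕ) : RatFunc ℚ :=
  if 1 ≤ i ∧ i ≤ n then
    (q ^ (2 : ℤ) - q ^ (-2 : ℤ))⁻¹ *
      ∏ p ∈ Finset.Icc ((n : ℤ) - i + 1) ((n : ℤ) + i - 1), (q ^ (2 * p) - q ^ (-(2 * p)))
  else 0

/-- The Gaussian binomial coefficient `binom(n,m)_Q = ∏_{k=1}^{m} (1 − Q^{n−k+1})/(1 − Q^{k})`. -/
def gbinom (Q : RatFunc ℚ) (n m : ℕ) : RatFunc ℚ :=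
  ∏ k ∈ Finset.range m, (1 - Q ^ ((n : ℤ) - k)) / (1 - Q ^ ((k : ℤ) + 1))

/-- The renormalized Macdonald (continuous q-ultraspherical) polynomial value
`C_m^{(i)}(x) = C_m(x; q^{4i} | q⁴)`. -/
def Cmac (i m : ℕ) (x : RatFunc ℚ) : RatFunc ℚ :=
  ∑ k ∈ Finset.range (m + 1),
    gbinom (q ^ 4) (k + i - 1) (i - 1) * gbinom (q ^ 4) (m - k + i - 1) (i - 1) *
      x ^ ((m : ℤ) - 2 * k)

/-
Put `Q = q⁴` and `m = n - i`. Then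
`C_m^{(i)}(q^{2i}) = q^{-2im} ∑_{k+l=m} [k+i-1, i-1]_Q [l+i-1, i-1]_Q Q^{il}`, and by the
q-Chu–Vandermonde identity this convolution is `[m+2i-1, 2i-1]_Q`. Since
`1 - Q^p = -q^{2p} (q^{2p} - q^{-2p})`, that Gaussian binomial equals
`q^{2(2i-1)m} ∏_{p=m+1}^{m+2i-1} (q^{2p} - q^{-2p}) / ∏_{p=1}^{2i-1} (q^{2p} - q^{-2p})`,
and the two products are `c_{n,i-1}` and `c_{i,i-1}` up to the same factor `(q² - q⁻²)⁻¹`.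
-/

open Finset

lemma one_sub_pow_ne_zero_of_not_isOfFinOrder {Q : RatFunc ℚ} (hQ : ¬IsOfFinOrder Q) {n : ℕ}
    (hn : n ≠ 0) : 1 - Q ^ n ≠ 0 :=
  sub_ne_zero.2 fun h => hQ (isOfFinOrder_iff_pow_eq_one.2 ⟨n, Nat.pos_of_ne_zero hn, h.symm⟩)

lemma gbinom_self {Q : RatFunc ℚ} (hQ : ¬IsOfFinOrder Q) (n : ℕ) : gbinom Q n n = 1 := by
  rw [gbinom, prod_div_distrib, div_eq_one_iff_eq]
  · rw [← prod_range_reflect]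
    refine prod_congr rfl fun k hk => ?_
    congr 2
    have := mem_range.1 hk
    omega
  · refine prod_ne_zero_iff.2 fun k _ => ?_
    exact_mod_cast one_sub_pow_ne_zero_of_not_isOfFinOrder hQ k.succ_ne_zero

lemma gbinom_add_one_add_mul_one_sub_pow (Q : RatFunc ℚ) (n r : ℕ) :
    gbinom Q (n + 1 + r) r * (1 - Q ^ (n + 1)) = gbinom Q (n + r) r * (1 - Q ^ (n + r + 1)) := by
  simp only [gbinom, prod_div_distrib, div_mul_eq_mul_div]
  congr 1
  -- both numerators are `∏_{k ≤ r} (1 - Q^(n+1+r-k))`, with the last resp. first factor split off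
  have h := (prod_range_succ (fun k => 1 - Q ^ ((n + 1 + r : ℕ) - k : ℤ)) r).symm.trans
    (prod_range_succ' (fun k => 1 - Q ^ ((n + 1 + r : ℕ) - k : ℤ)) r)
  push_cast at h ⊢
  convert h using 2
  · rw [← zpow_natCast]; congr 2; push_cast; ring
  · refine prod_congr rfl fun k _ => ?_; congr 2; ring
  · rw [← zpow_natCast]; congr 2; push_cast; ring

lemma one_sub_pow_mul_sum_antidiagonal_succ (Q : RatFunc ℚ) (a b m : ℕ) :
    (1 - Q ^ (m + 1)) * ∑ p ∈ antidiagonal (m + 1),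
        gbinom Q (p.1 + a) a * gbinom Q (p.2 + b) b * Q ^ ((a + 1) * p.2) =
      (1 - Q ^ (m + a + b + 2)) * ∑ p ∈ antidiagonal m,
        gbinom Q (p.1 + a) a * gbinom Q (p.2 + b) b * Q ^ ((a + 1) * p.2) := by
  -- split `1 - Q^(k+l) = (1 - Q^k) + Q^k (1 - Q^l)` and absorb each factor into a binomial
  have hsplit : ∀ p ∈ antidiagonal (m + 1), (1 - Q ^ (m + 1)) *
      (gbinom Q (p.1 + a) a * gbinom Q (p.2 + b) b * Q ^ ((a + 1) * p.2)) =
      gbinom Q (p.1 + a) a * gbinom Q (p.2 + b) b * Q ^ ((a + 1) * p.2) * (1 - Q ^ p.1) +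
      gbinom Q (p.1 + a) a * gbinom Q (p.2 + b) b * Q ^ ((a + 1) * p.2) * Q ^ p.1 *
        (1 - Q ^ p.2) := by
    intro p hp
    rw [← mem_antidiagonal.1 hp]
    ring
  rw [mul_sum, sum_congr rfl hsplit, sum_add_distrib, Nat.sum_antidiagonal_succ,
    Nat.sum_antidiagonal_succ']
  simp only [pow_zero, sub_self, mul_zero, zero_add]
  rw [← sum_add_distrib, mul_sum]
  refine sum_congr rfl fun p hp => ?_
  rw [← mem_antidiagonal.1 hp]
  linear_combination
    gbinom Q (p.2 + b) b * Q ^ ((a + 1) * p.2) * gbinom_add_one_add_mul_one_sub_pow Q p.1 a +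
    gbinom Q (p.1 + a) a * Q ^ ((a + 1) * (p.2 + 1)) * Q ^ p.1 *
      gbinom_add_one_add_mul_one_sub_pow Q p.2 b

theorem sum_antidiagonal_gbinom_mul_gbinom {Q : RatFunc ℚ} (hQ : ¬IsOfFinOrder Q) (a b m : ℕ) :
    ∑ p ∈ antidiagonal m, gbinom Q (p.1 + a) a * gbinom Q (p.2 + b) b * Q ^ ((a + 1) * p.2) =
      gbinom Q (m + a + b + 1) (a + b + 1) := by
  induction m with
  | zero => simp [gbinom_self hQ]
  | succ m ih =>
    refine mul_left_cancel₀ (one_sub_pow_ne_zero_of_not_isOfFinOrder hQ m.add_one_ne_zero) ?_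
    rw [one_sub_pow_mul_sum_antidiagonal_succ, ih]
    have h := gbinom_add_one_add_mul_one_sub_pow Q m (a + b + 1)
    rw [show m + 1 + (a + b + 1) = m + 1 + a + b + 1 by ring,
      show m + (a + b + 1) = m + a + b + 1 by ring] at h
    linear_combination -h

lemma q_ne_zero : q ≠ 0 := RatFunc.X_ne_zero

lemma not_isOfFinOrder_q : ¬IsOfFinOrder q := fun h => by
  obtain ⟨n, hn, hq⟩ := isOfFinOrder_iff_pow_eq_one.1 h
  have hX : IsAlgebraic ℚ q := IsAlgebraic.of_pow hn (by rw [hq]; exact isAlgebraic_one)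
  -- `RatFunc.transcendental_X` is stated for the `ℚ[X]`-induced `ℚ`-algebra structure, which
  -- agrees with `DivisionRing.toRatAlgebra` only up to `Subsingleton`
  exact RatFunc.transcendental_X (by convert hX; exacts [Subsingleton.elim _ _, rfl])

lemma not_isOfFinOrder_q_pow_four : ¬IsOfFinOrder (q ^ 4) :=
  fun h => not_isOfFinOrder_q (h.of_pow four_ne_zero)

def qdiff (p : ℤ) : RatFunc ℚ := q ^ (2 * p) - q ^ (-(2 * p))

lemma one_sub_q_pow_four_zpow (p : ℤ) : 1 - (q ^ 4) ^ p = -(q ^ (2 * p) * qdiff p) := by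
  rw [qdiff, mul_sub, ← zpow_add₀ q_ne_zero, ← zpow_add₀ q_ne_zero, ← zpow_natCast, ← zpow_mul]
  ring_nf
  rw [zpow_zero]
  ring

lemma qdiff_natCast_ne_zero {n : ℕ} (hn : n ≠ 0) : qdiff n ≠ 0 := by
  have h := one_sub_pow_ne_zero_of_not_isOfFinOrder not_isOfFinOrder_q_pow_four hn
  rw [← zpow_natCast, one_sub_q_pow_four_zpow] at h
  exact right_ne_zero_of_mul (neg_ne_zero.1 h)

lemma gbinom_q_pow_four_mul_prod_qdiff (N r : ℕ) :
    gbinom (q ^ 4) N r * ∏ p ∈ Icc (1 : ℤ) r, qdiff p =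
      q ^ (2 * r * ((N : ℤ) - r)) * ∏ p ∈ Icc ((N : ℤ) - r + 1) N, qdiff p := by
  induction r with
  | zero => simp [gbinom]
  | succ r ih =>
    have hfactor :
        (1 - (q ^ 4) ^ ((N : ℤ) - r)) / (1 - (q ^ 4) ^ ((r : ℤ) + 1)) * qdiff (r + 1) =
          q ^ (2 * ((N : ℤ) - 2 * r - 1)) * qdiff (N - r) := by
      have hr : qdiff (r + 1) ≠ 0 := by exact_mod_cast qdiff_natCast_ne_zero r.add_one_ne_zero
      rw [one_sub_q_pow_four_zpow, one_sub_q_pow_four_zpow, neg_div_neg_eq]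
      field_simp [q_ne_zero]
      rw [mul_comm, mul_assoc, ← zpow_add₀ q_ne_zero]
      ring_nf
    push_cast
    rw [gbinom, prod_range_succ, ← gbinom,
      ← insert_Icc_right_eq_Icc_add_one (a := (1 : ℤ)) (b := r) (by omega),
      show (N : ℤ) - (r + 1) + 1 = N - r by ring,
      ← insert_Icc_add_one_left_eq_Icc (a := (N : ℤ) - r) (b := N) (by omega),
      prod_insert (by simp), prod_insert (by simp)]
    have hpow : q ^ (2 * ((r : ℤ) + 1) * (N - (r + 1))) =
        q ^ (2 * (r : ℤ) * (N - r)) * q ^ (2 * ((N : ℤ) - 2 * r - 1)) := by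
      rw [← zpow_add₀ q_ne_zero]
      ring_nf
    rw [mul_comm (qdiff ((r : ℤ) + 1)), mul_mul_mul_comm, ih, hfactor, hpow]
    ring

lemma Cmac_q_zpow (a m : ℕ) :
    Cmac (a + 1) m (q ^ (2 * ((a : ℤ) + 1))) = q ^ (-(2 * ((a : ℤ) + 1) * m)) *
      ∑ p ∈ antidiagonal m,
        gbinom (q ^ 4) (p.1 + a) a * gbinom (q ^ 4) (p.2 + a) a * (q ^ 4) ^ ((a + 1) * p.2) := by
  rw [Cmac, Nat.sum_antidiagonal_eq_sum_range_succ (fun k l =>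
    gbinom (q ^ 4) (k + a) a * gbinom (q ^ 4) (l + a) a * (q ^ 4) ^ ((a + 1) * l)), mul_sum]
  refine sum_congr rfl fun k hk => ?_
  have hkm : k ≤ m := Nat.lt_succ_iff.1 (mem_range.1 hk)
  have hpow : (q ^ (2 * ((a : ℤ) + 1))) ^ ((m : ℤ) - 2 * k) =
      q ^ (-(2 * ((a : ℤ) + 1) * m)) * (q ^ 4) ^ ((a + 1) * (m - k)) := by
    rw [← zpow_mul, ← zpow_natCast, ← zpow_natCast q 4, ← zpow_mul, ← zpow_add₀ q_ne_zero]
    push_cast [hkm]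
    ring_nf
  simp only [← add_assoc, Nat.add_sub_cancel]
  rw [hpow]
  ring

lemma Cmac_mul_prod_qdiff (a m : ℕ) :
    Cmac (a + 1) m (q ^ (2 * ((a : ℤ) + 1))) * ∏ p ∈ Icc (1 : ℤ) (2 * a + 1), qdiff p =
      q ^ (2 * (a : ℤ) * m) * ∏ p ∈ Icc ((m : ℤ) + 1) (m + 2 * a + 1), qdiff p := by
  have h := gbinom_q_pow_four_mul_prod_qdiff (m + a + a + 1) (a + a + 1)
  push_cast at h
  rw [Cmac_q_zpow, sum_antidiagonal_gbinom_mul_gbinom not_isOfFinOrder_q_pow_four, mul_assoc,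
    show (2 * a + 1 : ℤ) = a + a + 1 by ring, h, ← mul_assoc, ← zpow_add₀ q_ne_zero]
  congr 2
  · ring
  · congr 1 <;> ring

lemma cyc_of_le {n i : ℕ} (hi : 1 ≤ i) (hin : i ≤ n) :
    cyc n i =
      (q ^ (2 : ℤ) - q ^ (-2 : ℤ))⁻¹ * ∏ p ∈ Icc ((n : ℤ) - i + 1) (n + i - 1), qdiff p :=
  if_pos ⟨hi, hin⟩

theorem macdonald_evaluation_at_t_eq_one (n i : ℕ) (hi : 1 ≤ i) (hin : i ≤ n) :
    Cmac i (n - i) (q ^ (2 * (i : ℤ))) * cyc i i =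
      q ^ (2 * ((n : ℤ) - i) * ((i : ℤ) - 1)) * cyc n i := by
  obtain ⟨a, rfl⟩ : ∃ a, i = a + 1 := ⟨i - 1, by omega⟩
  obtain ⟨m, rfl⟩ : ∃ m, n = m + (a + 1) := ⟨n - (a + 1), by omega⟩
  rw [Nat.add_sub_cancel, cyc_of_le hi le_rfl, cyc_of_le hi hin]
  push_cast
  rw [show (a : ℤ) + 1 - (a + 1) + 1 = 1 by ring,
    show (a : ℤ) + 1 + (a + 1) - 1 = 2 * a + 1 by ring,
    show (m : ℤ) + (a + 1) - (a + 1) + 1 = m + 1 by ring,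
    show (m : ℤ) + (a + 1) + (a + 1) - 1 = m + 2 * a + 1 by ring, mul_left_comm,
    Cmac_mul_prod_qdiff]
  ring_nf

end
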